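/- For t in (0,1), the sum Σ_{k≥1} k·(k^{k-2}/k!)·t^{k-1}·e^{-kt} equals 1 (mass conservation in the subcritical phase). -/

import Mathlib

/-!
Let `T x = ∑ k^(k-1) x^k / k!` be the tree function. Abel's identity
`∑ C(n,k) k^(k-1) (n-k)^(n-k) = n^n` is the coefficient form of `T · (x T') = x T' - T`, i.e.
`x T' (1 - T) = T` for `|x| < e⁻¹`. Hence `T e^(-T) / x` has zero derivative on `(0, e⁻¹)`,
and its limit at `0` is `T'(0) = 1`, so `T x · e^(-T x) = x`. Since `T x < 1` there and
`u ↦ u e^(-u)` is injective on `[0, 1]`, `T (t e^(-t)) = t` for `0 < t < 1`; the series of the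
theorem is `T (t e^(-t)) / t`.
-/

open Real Finset Filter Topology
open scoped Nat

lemma sum_range_neg_one_pow_mul_choose_mul_pow_eq_zero {j n : ℕ} (h : j < n) :
    ∑ k ∈ range (n + 1), (-1 : ℝ) ^ (n - k) * n.choose k * (k : ℝ) ^ j = 0 := by
  have := congrFun (fwdDiff_iter_pow_eq_zero_of_lt (R := ℝ) h) 0
  rw [fwdDiff_iter_eq_sum_shift] at this
  simpa [zsmul_eq_mul] using this

/-- The left-hand side of Abel's identity; `k = 0` is excluded because `0 ^ (0 - 1) = 1`. -/
def abelSum (n : ℕ) (y : ℝ) : ℝ :=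
  ∑ k ∈ Icc 1 n, (n.choose k : ℝ) * (k : ℝ) ^ (k - 1) * (y + n - k) ^ (n - k)

lemma hasDerivAt_abelSum (n : ℕ) (y : ℝ) :
    HasDerivAt (abelSum (n + 1)) ((n + 1) * abelSum n (y + 1)) y := by
  have hterm : ∀ k ∈ Icc 1 (n + 1), HasDerivAt
      (fun y : ℝ =>
        ((n + 1).choose k : ℝ) * (k : ℝ) ^ (k - 1) * (y + ↑(n + 1) - k) ^ (n + 1 - k))
      (((n + 1).choose k : ℝ) * (k : ℝ) ^ (k - 1) *
        ((n + 1 - k : ℕ) * (y + ↑(n + 1) - k) ^ (n + 1 - k - 1))) y := fun k _ =>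
    ((((hasDerivAt_id y).add_const _).sub_const _).pow _).const_mul _ |>.congr_deriv (by simp)
  refine (HasDerivAt.fun_sum hterm).congr_deriv ?_
  rw [sum_Icc_succ_top (by omega), Nat.sub_self, Nat.cast_zero, zero_mul, mul_zero, add_zero,
    abelSum, mul_sum]
  refine sum_congr rfl fun k hk => ?_
  have hchoose : ((n + 1).choose k : ℝ) * (n + 1 - k : ℕ) = n.choose k * (n + 1) := by
    exact_mod_cast (Nat.choose_mul_succ_eq n k).symm
  rw [show n + 1 - k - 1 = n - k by omega]
  push_cast
  linear_combination (k : ℝ) ^ (k - 1) * (y + 1 + n - k) ^ (n - k) * hchoose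

/-- At `y = -n` the Abel sum is the `n`-th forward difference of `x ↦ x ^ (n - 1)`. -/
lemma abelSum_neg_self (n : ℕ) : abelSum (n + 2) (-(n + 2 : ℕ)) = 0 := by
  have hdiff := sum_range_neg_one_pow_mul_choose_mul_pow_eq_zero (Nat.lt_succ_self (n + 1))
  rw [Nat.range_succ_eq_Icc_zero, ← insert_Icc_add_one_left_eq_Icc (n + 2).zero_le,
    sum_insert (by simp), Nat.cast_zero, zero_pow n.succ_ne_zero, mul_zero, zero_add,
    zero_add] at hdiff
  rw [← hdiff, abelSum]
  refine sum_congr rfl fun k hk => ?_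
  have hpow : (k : ℝ) ^ (k - 1) * k ^ (n + 2 - k) = k ^ (n + 1) := by
    rw [← pow_add]
    congr 1
    have := mem_Icc.mp hk
    omega
  rw [neg_add_cancel, zero_sub, neg_pow, ← hpow]
  ring

theorem abelSum_eq {n : ℕ} (hn : 1 ≤ n) (y : ℝ) : abelSum n y = n * (y + n) ^ (n - 1) := by
  induction n, hn using Nat.le_induction generalizing y with
  | base => simp [abelSum]
  | succ n hn ih =>
    obtain ⟨m, rfl⟩ := Nat.exists_eq_add_of_le' hn
    have hderiv (z : ℝ) : HasDerivAt
        (fun z => abelSum (m + 2) z - (m + 2 : ℕ) * (z + (m + 2 : ℕ)) ^ (m + 1)) 0 z := by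
      refine ((hasDerivAt_abelSum (m + 1) z).sub
        ((((hasDerivAt_id' z).add_const _).pow _).const_mul _)).congr_deriv ?_
      rw [ih]
      push_cast
      ring
    have := is_const_of_deriv_eq_zero (fun z => (hderiv z).differentiableAt)
      (fun z => (hderiv z).deriv) y (-(m + 2 : ℕ))
    rwa [abelSum_neg_self, neg_add_cancel, zero_pow m.succ_ne_zero, mul_zero, sub_zero,
      sub_eq_zero] at this

section PowerSeries

variable {a : ℕ → ℝ} {ρ x : ℝ}

lemma summable_norm_mul_pow_of_abs_le (ha : ∀ n, |a n| ≤ ρ ^ n) (hx : ρ * |x| < 1) :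
    Summable fun n => ‖a n * x ^ n‖ := by
  have hρ : 0 ≤ ρ := (abs_nonneg _).trans (pow_one ρ ▸ ha 1)
  refine (summable_geometric_of_lt_one (by positivity) hx).of_nonneg_of_le
    (fun _ => norm_nonneg _) fun n => ?_
  rw [norm_mul, norm_pow, norm_eq_abs, norm_eq_abs, mul_pow]
  exact mul_le_mul_of_nonneg_right (ha n) (by positivity)

lemma hasDerivAt_tsum_mul_pow (ha : ∀ n, |a n| ≤ ρ ^ n) (hx : ρ * |x| < 1) :
    HasDerivAt (fun z => ∑' n, a n * z ^ n) (∑' n, a n * (n * x ^ (n - 1))) x := by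
  have hρ : 0 ≤ ρ := (abs_nonneg _).trans (pow_one ρ ▸ ha 1)
  obtain ⟨r, hxr, hρr⟩ : ∃ r > |x|, ρ * r < 1 :=
    (((continuous_const.mul continuous_id).tendsto |x|).eventually (gt_mem_nhds hx)).exists_gt
  have hr : 0 < r := (abs_nonneg x).trans_lt hxr
  refine hasDerivAt_tsum_of_isPreconnected (t := Set.Ioo (-r) r) (y₀ := x)
    (u := fun n : ℕ => n * (ρ * r) ^ n / r) ?_ isOpen_Ioo isPreconnected_Ioo
    (fun n y _ => (hasDerivAt_pow n y).const_mul (a n)) (fun n y hy => ?_) (abs_lt.mp hxr)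
    (summable_norm_mul_pow_of_abs_le ha hx).of_norm (abs_lt.mp hxr)
  · have := summable_pow_mul_geometric_of_norm_lt_one 1
      (by rwa [norm_eq_abs, abs_of_nonneg (by positivity)] : ‖ρ * r‖ < 1)
    simpa only [pow_one] using this.div_const r
  · have hy : |y| ≤ r := (abs_lt.mpr hy).le
    rw [norm_mul, norm_mul, norm_eq_abs, norm_eq_abs, norm_eq_abs, Nat.abs_cast, abs_pow]
    rcases n with _ | m
    · simp
    calc |a (m + 1)| * ((m + 1 : ℕ) * |y| ^ (m + 1 - 1))
        ≤ ρ ^ (m + 1) * ((m + 1 : ℕ) * r ^ m) := by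
          rw [Nat.add_sub_cancel]
          gcongr
          exact ha _
      _ = (m + 1 : ℕ) * (ρ * r) ^ (m + 1) / r := by
          field_simp
          ring

end PowerSeries

/-- The case `k = 0` is separated because `0 ^ (0 - 1) = 1`. -/
noncomputable def treeCoeff (k : ℕ) : ℝ := if k = 0 then 0 else (k : ℝ) ^ (k - 1) / k !

@[simp] lemma treeCoeff_zero : treeCoeff 0 = 0 := if_pos rfl

lemma treeCoeff_of_ne_zero {k : ℕ} (hk : k ≠ 0) : treeCoeff k = (k : ℝ) ^ (k - 1) / k ! :=
  if_neg hk

lemma treeCoeff_nonneg (k : ℕ) : 0 ≤ treeCoeff k := by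
  unfold treeCoeff
  split <;> positivity

lemma natCast_mul_treeCoeff {k : ℕ} (hk : k ≠ 0) : k * treeCoeff k = (k : ℝ) ^ k / k ! := by
  rw [treeCoeff_of_ne_zero hk, mul_div_assoc', ← pow_succ',
    Nat.sub_add_cancel (Nat.pos_of_ne_zero hk)]

lemma natCast_mul_treeCoeff_le (k : ℕ) : k * treeCoeff k ≤ exp 1 ^ k := by
  rcases eq_or_ne k 0 with rfl | hk
  · simp
  rw [natCast_mul_treeCoeff hk, ← exp_nat_mul, mul_one]
  exact Real.pow_div_factorial_le_exp _ k.cast_nonneg k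

lemma treeCoeff_le (k : ℕ) : treeCoeff k ≤ exp 1 ^ k := by
  rcases eq_or_ne k 0 with rfl | hk
  · simp
  have hk1 : (1 : ℝ) ≤ k := by exact_mod_cast Nat.one_le_iff_ne_zero.mpr hk
  exact (le_mul_of_one_le_left (treeCoeff_nonneg k) hk1).trans (natCast_mul_treeCoeff_le k)

lemma sum_range_treeCoeff_mul {n : ℕ} (hn : 1 ≤ n) :
    ∑ i ∈ range (n + 1), treeCoeff i * ((n - i : ℕ) ^ (n - i) / (n - i)! : ℝ) =
      n * treeCoeff n := by
  have habel := abelSum_eq hn 0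
  rw [abelSum, zero_add] at habel
  rw [Nat.range_succ_eq_Icc_zero, ← insert_Icc_add_one_left_eq_Icc n.zero_le,
    sum_insert (by simp), treeCoeff_zero, zero_mul, zero_add, zero_add]
  have hterm : ∀ i ∈ Icc 1 n, treeCoeff i * ((n - i : ℕ) ^ (n - i) / (n - i)! : ℝ) =
      (n.choose i : ℝ) * (i : ℝ) ^ (i - 1) * (n - i) ^ (n - i) / n ! := by
    intro i hi
    obtain ⟨hi1, hin⟩ := mem_Icc.mp hi
    have hfact : (n.choose i * i ! * (n - i)! : ℝ) = n ! := by
      exact_mod_cast Nat.choose_mul_factorial_mul_factorial hin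
    have hchoose : (n.choose i : ℝ) ≠ 0 := by exact_mod_cast (Nat.choose_pos hin).ne'
    rw [treeCoeff_of_ne_zero (by omega), Nat.cast_sub hin, ← hfact]
    field_simp
  rw [sum_congr rfl hterm, ← sum_div, habel, treeCoeff_of_ne_zero (by omega)]
  ring

lemma sum_antidiagonal_treeCoeff_mul (n : ℕ) :
    ∑ p ∈ antidiagonal n, treeCoeff p.1 * (p.2 * treeCoeff p.2) =
      n * treeCoeff n - treeCoeff n := by
  rcases Nat.eq_zero_or_pos n with rfl | hn
  · simp
  have hmul (j : ℕ) : j * treeCoeff j = (j : ℝ) ^ j / (j ! : ℝ) - if j = 0 then 1 else 0 := by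
    rcases eq_or_ne j 0 with rfl | hj
    · simp
    rw [natCast_mul_treeCoeff hj, if_neg hj, sub_zero]
  rw [sum_congr rfl fun p _ => congrArg (treeCoeff p.1 * ·) (hmul p.2)]
  simp only [mul_sub, sum_sub_distrib, Nat.sum_antidiagonal_eq_sum_range_succ_mk]
  rw [sum_range_treeCoeff_mul hn,
    sum_eq_single_of_mem n (self_mem_range_succ n) fun i hi hin => ?_]
  · simp
  · rw [if_neg (by have := mem_range.mp hi; omega), mul_zero]

noncomputable def treeFun (x : ℝ) : ℝ := ∑' k, treeCoeff k * x ^ k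

section TreeFun

variable {x : ℝ}

lemma exp_one_mul_abs_lt_one (hx : |x| < (exp 1)⁻¹) : exp 1 * |x| < 1 :=
  (lt_inv_mul_iff₀ (exp_pos 1)).mp (by rwa [mul_one])

lemma abs_treeCoeff_le (k : ℕ) : |treeCoeff k| ≤ exp 1 ^ k :=
  (abs_of_nonneg (treeCoeff_nonneg k)).trans_le (treeCoeff_le k)

lemma summable_norm_treeCoeff_mul_pow (hx : |x| < (exp 1)⁻¹) :
    Summable fun k => ‖treeCoeff k * x ^ k‖ :=
  summable_norm_mul_pow_of_abs_le abs_treeCoeff_le (exp_one_mul_abs_lt_one hx)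

lemma summable_norm_natCast_mul_treeCoeff_mul_pow (hx : |x| < (exp 1)⁻¹) :
    Summable fun k => ‖(k * treeCoeff k) * x ^ k‖ :=
  summable_norm_mul_pow_of_abs_le
    (fun k => (abs_of_nonneg (mul_nonneg k.cast_nonneg (treeCoeff_nonneg k))).trans_le
      (natCast_mul_treeCoeff_le k))
    (exp_one_mul_abs_lt_one hx)

lemma hasDerivAt_treeFun (hx : |x| < (exp 1)⁻¹) :
    HasDerivAt treeFun (∑' k, treeCoeff k * (k * x ^ (k - 1))) x :=
  hasDerivAt_tsum_mul_pow abs_treeCoeff_le (exp_one_mul_abs_lt_one hx)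

lemma hasDerivAt_treeFun_zero : HasDerivAt treeFun 1 0 := by
  convert hasDerivAt_treeFun (x := 0) (by simp [exp_pos]) using 1
  rw [tsum_eq_single 1 fun k hk => ?_]
  · simp [treeCoeff]
  · rcases eq_or_ne k 0 with rfl | hk0
    · simp
    · rw [zero_pow (by omega), mul_zero, mul_zero]

@[simp] lemma treeFun_zero : treeFun 0 = 0 := by
  rw [treeFun, tsum_eq_single 0 fun k hk => by rw [zero_pow hk, mul_zero], treeCoeff_zero,
    zero_mul]

lemma treeFun_mul_tsum_natCast_mul_treeCoeff_mul_pow (hx : |x| < (exp 1)⁻¹) :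
    treeFun x * ∑' k, (k * treeCoeff k) * x ^ k =
      ∑' k, (k * treeCoeff k) * x ^ k - treeFun x := by
  rw [treeFun, tsum_mul_tsum_eq_tsum_sum_antidiagonal_of_summable_norm
    (summable_norm_treeCoeff_mul_pow hx) (summable_norm_natCast_mul_treeCoeff_mul_pow hx),
    ← Summable.tsum_sub (summable_norm_natCast_mul_treeCoeff_mul_pow hx).of_norm
      (summable_norm_treeCoeff_mul_pow hx).of_norm]
  refine tsum_congr fun n => ?_
  rw [← sub_mul, ← sum_antidiagonal_treeCoeff_mul, sum_mul]
  refine sum_congr rfl fun p hp => ?_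
  rw [← mem_antidiagonal.mp hp, pow_add]
  ring

lemma treeFun_ode (hx : |x| < (exp 1)⁻¹) :
    x * (∑' k, treeCoeff k * (k * x ^ (k - 1))) * (1 - treeFun x) = treeFun x := by
  have hxD : x * ∑' k, treeCoeff k * (k * x ^ (k - 1)) = ∑' k, (k * treeCoeff k) * x ^ k := by
    rw [← tsum_mul_left]
    refine tsum_congr fun k => ?_
    rcases eq_or_ne k 0 with rfl | hk
    · simp
    rw [← pow_sub_one_mul hk]
    ring
  rw [hxD]
  linear_combination -(treeFun_mul_tsum_natCast_mul_treeCoeff_mul_pow hx)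

lemma treeFun_mul_exp_neg (hx : x ∈ Set.Ioo 0 (exp 1)⁻¹) :
    treeFun x * exp (-treeFun x) = x := by
  set L : ℝ → ℝ := fun z => treeFun z * exp (-treeFun z) / z
  have habs {z : ℝ} (hz : z ∈ Set.Ioo 0 (exp 1)⁻¹) : |z| < (exp 1)⁻¹ := by
    rw [abs_of_pos hz.1]
    exact hz.2
  have hL {z : ℝ} (hz : z ∈ Set.Ioo 0 (exp 1)⁻¹) : HasDerivAt L 0 z := by
    have hT := hasDerivAt_treeFun (habs hz)
    refine ((hT.fun_mul hT.fun_neg.exp).fun_div (hasDerivAt_id' z) hz.1.ne').congr_deriv ?_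
    refine div_eq_zero_iff.mpr (Or.inl ?_)
    linear_combination exp (-treeFun z) * treeFun_ode (habs hz)
  have hconst : ∀ z ∈ Set.Ioo 0 (exp 1)⁻¹, L z = L x := fun z hz =>
    isOpen_Ioo.is_const_of_deriv_eq_zero isPreconnected_Ioo
      (fun w hw => (hL hw).differentiableAt.differentiableWithinAt) (fun w hw => (hL hw).deriv)
      hz hx
  have hlim : Tendsto L (𝓝[>] 0) (𝓝 1) := by
    have hslope := hasDerivAt_treeFun_zero.tendsto_slope_zero_right
    simp only [zero_add, treeFun_zero, sub_zero, smul_eq_mul] at hslope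
    have hexp : Tendsto (fun z => exp (-treeFun z)) (𝓝[>] 0) (𝓝 1) := by
      simpa using hasDerivAt_treeFun_zero.continuousAt.neg.rexp.tendsto.mono_left
        nhdsWithin_le_nhds
    simpa [L, div_eq_inv_mul, mul_assoc] using hslope.mul hexp
  have hlimx : Tendsto L (𝓝[>] 0) (𝓝 (L x)) :=
    tendsto_const_nhds.congr' (eventually_of_mem (Ioo_mem_nhdsGT (by positivity))
      fun z hz => (hconst z hz).symm)
  exact (div_eq_one_iff_eq hx.1.ne').mp (tendsto_nhds_unique hlimx hlim)

lemma treeFun_lt_one (hx : x ∈ Set.Ioo 0 (exp 1)⁻¹) : treeFun x < 1 := by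
  by_contra! hle
  have hcont : ContinuousOn treeFun (Set.Icc 0 x) := fun y hy =>
    (hasDerivAt_treeFun (by rw [abs_of_nonneg hy.1]; exact hy.2.trans_lt hx.2)).continuousAt
      |>.continuousWithinAt
  obtain ⟨y, hy, hy1⟩ :=
    intermediate_value_Icc hx.1.le hcont ⟨treeFun_zero.trans_le zero_le_one, hle⟩
  have hy0 : 0 < y := hy.1.lt_of_ne (by rintro rfl; simp at hy1)
  have := treeFun_mul_exp_neg ⟨hy0, hy.2.trans_lt hx.2⟩
  rw [hy1, one_mul, exp_neg] at this
  linarith [hy.2, hx.2]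

end TreeFun

lemma strictMonoOn_mul_exp_neg : StrictMonoOn (fun u => u * exp (-u)) (Set.Icc 0 1) := by
  refine strictMonoOn_of_deriv_pos (convex_Icc 0 1) (by fun_prop) fun u hu => ?_
  rw [interior_Icc] at hu
  rw [((hasDerivAt_id' u).fun_mul (hasDerivAt_id' u).fun_neg.exp).deriv]
  nlinarith [exp_pos (-u), hu.2]

lemma treeFun_mul_exp_neg_self {t : ℝ} (h0 : 0 < t) (h1 : t < 1) :
    treeFun (t * exp (-t)) = t := by
  have hx1 : t * exp (-t) < (exp 1)⁻¹ := by
    simpa [← exp_neg] using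
      strictMonoOn_mul_exp_neg ⟨h0.le, h1.le⟩ ⟨zero_le_one, le_rfl⟩ h1
  have hx : t * exp (-t) ∈ Set.Ioo 0 (exp 1)⁻¹ := ⟨by positivity, hx1⟩
  refine strictMonoOn_mul_exp_neg.injOn ⟨?_, (treeFun_lt_one hx).le⟩ ⟨h0.le, h1.le⟩
    (treeFun_mul_exp_neg hx)
  exact tsum_nonneg fun k => mul_nonneg (treeCoeff_nonneg k) (pow_nonneg hx.1.le k)

lemma natCast_mul_pow_sub_two_div_factorial {t : ℝ} (ht : t ≠ 0) (k : ℕ) :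
    k * ((k : ℝ) ^ (k - 2) / k ! * t ^ (k - 1) * exp (-k * t)) =
      treeCoeff k * (t * exp (-t)) ^ k / t := by
  rcases eq_or_ne k 0 with rfl | hk
  · simp
  have hkk : (k : ℝ) * k ^ (k - 2) = k ^ (k - 1) := by
    obtain rfl | hk1 := eq_or_ne k 1
    · simp
    rw [← pow_succ']
    congr 1
    omega
  rw [treeCoeff_of_ne_zero hk, mul_pow, ← exp_nat_mul, ← pow_sub_one_mul hk t, ← hkk, neg_mul,
    mul_neg]
  field_simp

theorem stmt_3 (t : ℝ) (h0 : 0 < t) (h1 : t < 1) :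
    ∑' k : ℕ, (k : ℝ) * ((k : ℝ) ^ (k - 2) / (Nat.factorial k) * t ^ (k - 1)
      * Real.exp (-(k : ℝ) * t)) = 1 := by
  simp_rw [natCast_mul_pow_sub_two_div_factorial h0.ne']
  rw [tsum_div_const, ← treeFun, treeFun_mul_exp_neg_self h0 h1, div_self h0.ne']
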